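/- Let E be a real inner product space and f : E → ℝ a differentiable function with L-Lipschitz gradient (‖∇f(x) − ∇f(y)‖ ≤ L‖x − y‖ for all x, y) that attains its minimum value f* and satisfies the Polyak–Łojasiewicz condition with constant μ, where 0 < μ ≤ L: f(x) − f* ≤ (1/(2μ))‖∇f(x)‖² for all x ∈ E. Define the gradient-descent sequence x^{k+1} = x^k − (1/L)∇f(x^k) from an arbitrary x⁰ ∈ E. Then for every N: f(x^N) − f* ≤ (1 − μ/L)^N (f(x⁰) − f*) ≤ exp(−μN/L)(f(x⁰) − f*). -/

import Mathlib

/-!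
An `L`-Lipschitz gradient gives the quadratic upper bound
`f y ≤ f x + ⟪∇f x, y - x⟫ + L/2 ‖y - x‖²`, so a gradient step of length `1/L` decreases `f` by
at least `‖∇f x‖² / (2L)`. The Polyak–Łojasiewicz inequality bounds this decrease from below by
`(μ/L) (f x - f*)`, hence the optimality gap contracts by the factor `1 - μ/L ≤ exp (-μ/L)` at
every step.
-/

open scoped RealInnerProductSpace

section Smooth

variable {E : Type*} [NormedAddCommGroup E] [InnerProductSpace ℝ E] [CompleteSpace E]
  {f : E → ℝ} {f' : E → E}

theorem HasGradientAt.hasDerivAt_add_smul {x d g : E} {t : ℝ}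
    (h : HasGradientAt f g (x + t • d)) :
    HasDerivAt (fun s : ℝ => f (x + s • d)) ⟪g, d⟫ t := by
  have hline : HasDerivAt (fun s : ℝ => x + s • d) d t := by
    simpa using ((hasDerivAt_id t).smul_const d).const_add x
  simpa [Function.comp_def] using h.hasFDerivAt.comp_hasDerivAt t hline

theorem le_add_inner_add_sq_of_lipschitz_gradient (hf : ∀ x, HasGradientAt f (f' x) x) {L : ℝ}
    (hLip : ∀ x y, ‖f' x - f' y‖ ≤ L * ‖x - y‖) (x y : E) :
    f y ≤ f x + ⟪f' x, y - x⟫ + L / 2 * ‖y - x‖ ^ 2 := by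
  set d := y - x
  -- `φ` is antitone on `[0, 1]`, and `φ 1 ≤ φ 0` is the claim.
  set φ : ℝ → ℝ := fun t => f (x + t • d) - t * ⟪f' x, d⟫ - L / 2 * ‖d‖ ^ 2 * t ^ 2
  have hφ : ∀ t : ℝ, HasDerivAt φ (⟪f' (x + t • d) - f' x, d⟫ - L * ‖d‖ ^ 2 * t) t := by
    intro t
    have hquad : HasDerivAt (fun t : ℝ => L / 2 * ‖d‖ ^ 2 * t ^ 2) (L * ‖d‖ ^ 2 * t) t :=
      ((hasDerivAt_pow 2 t).const_mul (L / 2 * ‖d‖ ^ 2)).congr_deriv (by ring)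
    rw [inner_sub_left]
    exact (((hf _).hasDerivAt_add_smul).sub ((hasDerivAt_id t).mul_const _)).sub hquad
      |>.congr_deriv (by simp)
  have hanti : AntitoneOn φ (Set.Icc 0 1) := by
    refine antitoneOn_of_deriv_nonpos (convex_Icc 0 1)
      (fun t _ => (hφ t).continuousAt.continuousWithinAt)
      (fun t _ => (hφ t).differentiableAt.differentiableWithinAt) fun t ht => ?_
    rw [interior_Icc] at ht
    have hinner : ⟪f' (x + t • d) - f' x, d⟫ ≤ L * ‖d‖ ^ 2 * t :=
      calc ⟪f' (x + t • d) - f' x, d⟫ ≤ ‖f' (x + t • d) - f' x‖ * ‖d‖ := real_inner_le_norm _ _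
        _ ≤ L * ‖(x + t • d) - x‖ * ‖d‖ := by gcongr; exact hLip _ _
        _ = L * ‖d‖ ^ 2 * t := by
          rw [add_sub_cancel_left, norm_smul, Real.norm_of_nonneg ht.1.le]; ring
    rw [(hφ t).deriv]
    linarith
  have h10 := hanti (Set.left_mem_Icc.2 zero_le_one) (Set.right_mem_Icc.2 zero_le_one) zero_le_one
  simp only [φ, zero_smul, add_zero, one_smul, zero_mul, one_mul, sub_zero, ne_eq,
    OfNat.ofNat_ne_zero, not_false_eq_true, zero_pow, mul_zero, one_pow, mul_one] at h10
  rw [add_sub_cancel] at h10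
  linarith

theorem le_sub_sq_norm_gradient_of_lipschitz_gradient (hf : ∀ x, HasGradientAt f (f' x) x)
    {L : ℝ} (hL : L ≠ 0) (hLip : ∀ x y, ‖f' x - f' y‖ ≤ L * ‖x - y‖) (x : E) :
    f (x - (1 / L) • f' x) ≤ f x - 1 / (2 * L) * ‖f' x‖ ^ 2 := by
  have h := le_add_inner_add_sq_of_lipschitz_gradient hf hLip x (x - (1 / L) • f' x)
  rw [sub_sub_cancel_left, inner_neg_right, real_inner_smul_right, real_inner_self_eq_norm_sq,
    norm_neg, norm_smul, Real.norm_eq_abs, mul_pow, sq_abs] at h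
  convert h using 1
  field_simp
  ring

theorem sub_le_mul_sub_of_gradient_step_of_PL (hf : ∀ x, HasGradientAt f (f' x) x)
    {L μ fstar : ℝ} (hL : 0 < L) (hμ : 0 < μ) (hLip : ∀ x y, ‖f' x - f' y‖ ≤ L * ‖x - y‖)
    {x : E} (hPL : f x - fstar ≤ 1 / (2 * μ) * ‖f' x‖ ^ 2) :
    f (x - (1 / L) • f' x) - fstar ≤ (1 - μ / L) * (f x - fstar) := by
  have hdecrease := le_sub_sq_norm_gradient_of_lipschitz_gradient hf hL.ne' hLip x
  have hgrad : μ / L * (f x - fstar) ≤ 1 / (2 * L) * ‖f' x‖ ^ 2 :=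
    calc μ / L * (f x - fstar) ≤ μ / L * (1 / (2 * μ) * ‖f' x‖ ^ 2) := by gcongr
      _ = 1 / (2 * L) * ‖f' x‖ ^ 2 := by field_simp
  linarith

end Smooth

theorem one_sub_pow_le_exp_neg_mul {t : ℝ} (ht : t ≤ 1) (N : ℕ) :
    (1 - t) ^ N ≤ Real.exp (-t * N) := by
  rw [mul_comm, Real.exp_nat_mul]
  exact pow_le_pow_left₀ (sub_nonneg.2 ht) (Real.one_sub_le_exp_neg t) N

theorem gradient_descent_PL_linear_convergence_general
    {E : Type*} [NormedAddCommGroup E] [InnerProductSpace ℝ E] [CompleteSpace E]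
    (f : E → ℝ) (f' : E → E) (hdiff : ∀ x, HasGradientAt f (f' x) x)
    (L μ : ℝ) (hμ : 0 < μ) (hμL : μ ≤ L)
    (hLip : ∀ x y, ‖f' x - f' y‖ ≤ L * ‖x - y‖)
    (fstar : ℝ) (hlb : ∀ x, fstar ≤ f x)
    (hPL : ∀ x, f x - fstar ≤ 1 / (2 * μ) * ‖f' x‖ ^ 2)
    (x : ℕ → E) (hstep : ∀ k, x (k + 1) = x k - (1 / L) • f' (x k)) :
    ∀ N : ℕ,
      f (x N) - fstar ≤ (1 - μ / L) ^ N * (f (x 0) - fstar) ∧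
      (1 - μ / L) ^ N * (f (x 0) - fstar) ≤
        Real.exp (-(μ / L) * N) * (f (x 0) - fstar) := by
  intro N
  have hL : 0 < L := hμ.trans_le hμL
  have hratio : μ / L ≤ 1 := (div_le_one hL).2 hμL
  have hcontract : ∀ k, f (x (k + 1)) - fstar ≤ (1 - μ / L) * (f (x k) - fstar) := fun k => by
    rw [hstep k]
    exact sub_le_mul_sub_of_gradient_step_of_PL hdiff hL hμ hLip (hPL (x k))
  refine ⟨le_geom (u := fun k => f (x k) - fstar) (sub_nonneg.2 hratio) N
    fun k _ => hcontract k, ?_⟩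
  exact mul_le_mul_of_nonneg_right (one_sub_pow_le_exp_neg_mul hratio N)
    (sub_nonneg.2 (hlb (x 0)))

/-- Linear convergence of gradient descent with constant step `1/L` for an
`L`-smooth function satisfying the Polyak–Łojasiewicz condition. -/
theorem gradient_descent_PL_linear_convergence
    {E : Type*} [NormedAddCommGroup E] [InnerProductSpace ℝ E] [CompleteSpace E]
    (f : E → ℝ) (f' : E → E) (hdiff : ∀ x, HasGradientAt f (f' x) x)
    (L μ : ℝ) (hμ : 0 < μ) (hμL : μ ≤ L)
    (hLip : ∀ x y, ‖f' x - f' y‖ ≤ L * ‖x - y‖)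
    (fstar : ℝ) (hmin : ∃ xs, f xs = fstar) (hlb : ∀ x, fstar ≤ f x)
    (hPL : ∀ x, f x - fstar ≤ 1 / (2 * μ) * ‖f' x‖ ^ 2)
    (x : ℕ → E) (hstep : ∀ k, x (k + 1) = x k - (1 / L) • f' (x k)) :
    ∀ N : ℕ,
      f (x N) - fstar ≤ (1 - μ / L) ^ N * (f (x 0) - fstar) ∧
      (1 - μ / L) ^ N * (f (x 0) - fstar) ≤
        Real.exp (-(μ / L) * N) * (f (x 0) - fstar) :=
  gradient_descent_PL_linear_convergence_general f f' hdiff L μ hμ hμL hLip fstar hlb hPL x hstep
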